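/- arXiv:2511.19140 — 2 statements merged into one kernel-verified Lean document; each statement's English description precedes it below -/
import Mathlib

section
/- For fixed x > |y| ≥ 0, the function ε ↦ (ε²/2)(sinh τ_ε + τ_ε), where τ_ε = arcosh((x² − y²)/(2ε²) + 1), is strictly increasing on (0, ∞). -/
open Real

/-- Inverse hyperbolic cosine on `[1, ∞)`. -/
noncomputable def arcosh (x : ℝ) : ℝ := Real.log (x + Real.sqrt (x ^ 2 - 1))

/-!
Write `c = x² - y² > 0` and `τ = arcosh (c / (2ε²) + 1)`. Since `cosh τ - 1 = c / (2ε²)`, the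
function equals `(c / 4) · (sinh τ + τ) / (cosh τ - 1)`. The map `t ↦ (sinh t + t) / (cosh t - 1)`
is strictly decreasing on `(0, ∞)`, its derivative being `-t sinh t / (cosh t - 1)²`, and `τ` is a
strictly decreasing function of `ε`; the composite is therefore strictly increasing.
-/

open Set

lemma arcosh_eq_real_arcosh : _root_.arcosh = Real.arcosh := rfl

lemma hasDerivAt_sinh_add_self_div_cosh_sub_one {t : ℝ} (ht : t ≠ 0) :
    HasDerivAt (fun t => (sinh t + t) / (cosh t - 1))
      (-(t * sinh t) / (cosh t - 1) ^ 2) t := by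
  have hcosh : cosh t - 1 ≠ 0 := sub_ne_zero.2 (one_lt_cosh.2 ht).ne'
  have h : HasDerivAt (fun t => (sinh t + t) / (cosh t - 1))
      (((cosh t + 1) * (cosh t - 1) - (sinh t + t) * sinh t) / (cosh t - 1) ^ 2) t :=
    ((hasDerivAt_sinh t).add (hasDerivAt_id' t)).div ((hasDerivAt_cosh t).sub_const 1) hcosh
  convert h using 1
  linear_combination (-1 / (cosh t - 1) ^ 2) * Real.cosh_sq t

lemma strictAntiOn_sinh_add_self_div_cosh_sub_one :
    StrictAntiOn (fun t => (sinh t + t) / (cosh t - 1)) (Ioi 0) := by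
  have hderiv (t : ℝ) (ht : t ∈ Ioi 0) := hasDerivAt_sinh_add_self_div_cosh_sub_one (ne_of_gt ht)
  refine strictAntiOn_of_deriv_neg (convex_Ioi 0)
    (fun t ht => (hderiv t ht).continuousAt.continuousWithinAt) fun t ht => ?_
  rw [interior_Ioi] at ht
  rw [(hderiv t ht).deriv]
  have hsinh : 0 < sinh t := sinh_pos_iff.2 ht
  have hcosh : 1 < cosh t := one_lt_cosh.2 (ne_of_gt ht)
  exact div_neg_of_neg_of_pos (neg_neg_of_pos (mul_pos ht hsinh)) (pow_pos (sub_pos.2 hcosh) 2)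

lemma strictAntiOn_arcosh_div_sq_add_one {c : ℝ} (hc : 0 < c) :
    StrictAntiOn (fun ε : ℝ => Real.arcosh (c / (2 * ε ^ 2) + 1)) (Ioi 0) := by
  intro a ha b hb hab
  rw [mem_Ioi] at ha hb
  rw [arcosh_lt_arcosh (by positivity) (by positivity)]
  gcongr

theorem strictMonoOn_sq_mul_sinh_arcosh_add_arcosh {c : ℝ} (hc : 0 < c) :
    StrictMonoOn
      (fun ε : ℝ => ε ^ 2 / 2 * (sinh (Real.arcosh (c / (2 * ε ^ 2) + 1))
        + Real.arcosh (c / (2 * ε ^ 2) + 1)))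
      (Ioi 0) := by
  set τ := fun ε : ℝ => Real.arcosh (c / (2 * ε ^ 2) + 1)
  have hτ_pos (ε : ℝ) (hε : ε ∈ Ioi 0) : τ ε ∈ Ioi 0 :=
    arcosh_pos (lt_add_of_pos_left 1 (by rw [mem_Ioi] at hε; positivity))
  have hτ_eq (ε : ℝ) (hε : ε ∈ Ioi 0) :
      ε ^ 2 / 2 * (sinh (τ ε) + τ ε) = c / 4 * ((sinh (τ ε) + τ ε) / (cosh (τ ε) - 1)) := by
    rw [mem_Ioi] at hε
    have hcosh : cosh (τ ε) - 1 = c / (2 * ε ^ 2) := by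
      rw [cosh_arcosh (le_add_of_nonneg_left (by positivity))]
      ring
    rw [hcosh]
    field_simp
    ring
  intro a ha b hb hab
  change a ^ 2 / 2 * (sinh (τ a) + τ a) < b ^ 2 / 2 * (sinh (τ b) + τ b)
  rw [hτ_eq a ha, hτ_eq b hb]
  exact mul_lt_mul_of_pos_left (strictAntiOn_sinh_add_self_div_cosh_sub_one (hτ_pos b hb)
    (hτ_pos a ha) (strictAntiOn_arcosh_div_sq_add_one hc ha hb hab)) (by positivity)

theorem stmt_6 (x y : ℝ) (hxy : |y| < x) :
    StrictMonoOn
      (fun ε : ℝ => ε ^ 2 / 2 * (sinh (_root_.arcosh ((x ^ 2 - y ^ 2) / (2 * ε ^ 2) + 1))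
        + _root_.arcosh ((x ^ 2 - y ^ 2) / (2 * ε ^ 2) + 1)))
      (Set.Ioi 0) := by
  rw [arcosh_eq_real_arcosh]
  exact strictMonoOn_sq_mul_sinh_arcosh_add_arcosh
    (sub_pos.2 (sq_lt_sq' (neg_lt_of_abs_lt hxy) (lt_of_abs_lt hxy)))
end

section
/- With A_ε and A₀ as above, for every point q ∈ ℝ³ the indicator functions converge: lim_{ε → 0⁺} χ_{A_ε}(q) = χ_{A₀}(q). -/
open Real Filter

/-- Attainable set of the `ε`-Lorentzian problem on the Heisenberg group. -/
def attainSet (ε : ℝ) : Set (ℝ × ℝ × ℝ) :=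
  {p | p.1 ≥ |p.2.1| ∧
    |p.2.2| ≤ ε ^ 2 / 2 *
      (sinh (_root_.arcosh ((p.1 ^ 2 - p.2.1 ^ 2) / (2 * ε ^ 2) + 1))
        + _root_.arcosh ((p.1 ^ 2 - p.2.1 ^ 2) / (2 * ε ^ 2) + 1))}

/-- Attainable set of the limiting sub-Lorentzian problem. -/
def attainSet₀ : Set (ℝ × ℝ × ℝ) :=
  {p | p.1 ≥ 0 ∧ 4 * |p.2.2| ≤ p.1 ^ 2 - p.2.1 ^ 2}
/-
Write `s = x² - y²` and `u = s / (2ε²) + 1`. For `x ≥ |y|` the constraint defining `A_ε` is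
`|z| ≤ b_ε(s) := ε²/2 (√(u² - 1) + arcosh u)`. Since `√(u² - 1) ≥ u - 1 = s / (2ε²)` we get
`b_ε(s) ≥ s / 4`, so `A₀ ⊆ A_ε`. Conversely `ε² √(u² - 1) = √(s²/4 + s ε²)` and, from
`t² ≤ 2 (cosh t - 1)`, `arcosh u ≤ √(2 (u - 1)) = √s / ε`; hence `b_ε(s) → s / 4`, and a point
with `4|z| > s` lies outside `A_ε` for all small `ε`.
-/

namespace Real

lemma sq_le_two_mul_cosh_sub_one (t : ℝ) : t ^ 2 ≤ 2 * (cosh t - 1) := by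
  set a := |t| / 2
  have ha : a ≤ sinh a := self_le_sinh_iff.2 (by positivity)
  have hcosh : cosh t = 1 + 2 * sinh a ^ 2 := by
    rw [← cosh_abs, show |t| = 2 * a by ring, cosh_two_mul, cosh_sq]; ring
  have ht : t ^ 2 = 4 * a ^ 2 := by rw [← sq_abs]; ring
  nlinarith [show 0 ≤ a by positivity]

lemma arcosh_le_sqrt {u : ℝ} (hu : 1 ≤ u) : arcosh u ≤ √(2 * (u - 1)) := by
  apply le_sqrt_of_sq_le
  simpa only [cosh_arcosh hu] using sq_le_two_mul_cosh_sub_one (arcosh u)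

lemma sub_one_le_sinh_arcosh {u : ℝ} (hu : 1 ≤ u) : u - 1 ≤ sinh (arcosh u) := by
  rw [sinh_arcosh hu]
  exact le_sqrt_of_sq_le (by nlinarith)

end Real

noncomputable def attainBound (s ε : ℝ) : ℝ :=
  ε ^ 2 / 2 * (sinh (Real.arcosh (s / (2 * ε ^ 2) + 1)) + Real.arcosh (s / (2 * ε ^ 2) + 1))

-- `_root_.arcosh` and `Real.arcosh` are given by the same formula.
lemma mem_attainSet_iff {ε : ℝ} {p : ℝ × ℝ × ℝ} :
    p ∈ attainSet ε ↔ |p.2.1| ≤ p.1 ∧ |p.2.2| ≤ attainBound (p.1 ^ 2 - p.2.1 ^ 2) ε :=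
  Iff.rfl

variable {s ε : ℝ}

lemma quarter_le_attainBound (hs : 0 ≤ s) (hε : ε ≠ 0) : s / 4 ≤ attainBound s ε := by
  have hu : 1 ≤ s / (2 * ε ^ 2) + 1 := by simp only [le_add_iff_nonneg_left]; positivity
  calc s / 4 = ε ^ 2 / 2 * (s / (2 * ε ^ 2) + 1 - 1 + 0) := by field_simp; ring
    _ ≤ attainBound s ε := by
      unfold attainBound
      gcongr
      · exact Real.sub_one_le_sinh_arcosh hu
      · exact Real.arcosh_nonneg hu

lemma attainBound_le (hs : 0 ≤ s) (hε : 0 < ε) :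
    attainBound s ε ≤ √(s ^ 2 / 4 + s * ε ^ 2) / 2 + √s * ε / 2 := by
  set u := s / (2 * ε ^ 2) + 1
  have hu : 1 ≤ u := by simp only [u, le_add_iff_nonneg_left]; positivity
  have hsinh : ε ^ 2 * sinh (Real.arcosh u) = √(s ^ 2 / 4 + s * ε ^ 2) := by
    rw [Real.sinh_arcosh hu,
      show s ^ 2 / 4 + s * ε ^ 2 = (ε ^ 2) ^ 2 * (u ^ 2 - 1) by simp only [u]; field_simp; ring,
      Real.sqrt_mul (by positivity), Real.sqrt_sq (by positivity)]
  have harcosh : ε ^ 2 * Real.arcosh u ≤ √s * ε := by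
    calc ε ^ 2 * Real.arcosh u ≤ ε ^ 2 * √(2 * (u - 1)) := by
          gcongr; exact Real.arcosh_le_sqrt hu
      _ = √s * ε := by
          rw [show 2 * (u - 1) = s / ε ^ 2 by simp only [u]; field_simp; ring,
            Real.sqrt_div' _ (sq_nonneg ε), Real.sqrt_sq hε.le]
          field_simp
  unfold attainBound
  linarith

lemma tendsto_attainBound (hs : 0 ≤ s) :
    Tendsto (attainBound s) (nhdsWithin 0 (Set.Ioi 0)) (nhds (s / 4)) := by
  have hupper : Tendsto (fun ε => √(s ^ 2 / 4 + s * ε ^ 2) / 2 + √s * ε / 2)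
      (nhdsWithin 0 (Set.Ioi 0)) (nhds (s / 4)) := by
    have h : Continuous fun ε : ℝ => √(s ^ 2 / 4 + s * ε ^ 2) / 2 + √s * ε / 2 := by fun_prop
    convert h.continuousWithinAt.tendsto using 2
    simp only [ne_eq, OfNat.ofNat_ne_zero, not_false_eq_true, zero_pow, mul_zero, add_zero,
      zero_div]
    rw [show s ^ 2 / 4 = (s / 2) ^ 2 by ring, Real.sqrt_sq (by positivity)]
    ring
  refine tendsto_of_tendsto_of_tendsto_of_le_of_le' tendsto_const_nhds hupper ?_ ?_
  · filter_upwards [self_mem_nhdsWithin] with ε hε using quarter_le_attainBound hs hε.ne'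
  · filter_upwards [self_mem_nhdsWithin] with ε hε using attainBound_le hs hε

lemma attainSet₀_subset_attainSet (hε : ε ≠ 0) : attainSet₀ ⊆ attainSet ε := by
  rintro ⟨x, y, z⟩ ⟨hx, hz⟩
  have hs : 0 ≤ x ^ 2 - y ^ 2 := (by positivity : 0 ≤ 4 * |z|).trans hz
  refine ⟨abs_le_of_sq_le_sq (by linarith) hx, ?_⟩
  exact (by linarith : |z| ≤ (x ^ 2 - y ^ 2) / 4).trans (quarter_le_attainBound hs hε)

lemma eventually_notMem_attainSet {q : ℝ × ℝ × ℝ} (hq : q ∉ attainSet₀) :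
    ∀ᶠ ε in nhdsWithin 0 (Set.Ioi 0), q ∉ attainSet ε := by
  obtain ⟨x, y, z⟩ := q
  by_cases hxy : |y| ≤ x
  · have hs : 0 ≤ x ^ 2 - y ^ 2 := by nlinarith [sq_abs y, abs_nonneg y]
    have hz : (x ^ 2 - y ^ 2) / 4 < |z| := by
      by_contra! hz
      exact hq ⟨(abs_nonneg y).trans hxy, by linarith⟩
    filter_upwards [(tendsto_attainBound hs).eventually_lt_const hz] with ε hε hmem
    exact (mem_attainSet_iff.1 hmem).2.not_gt hε
  · exact Eventually.of_forall fun ε hmem => hxy (mem_attainSet_iff.1 hmem).1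

theorem stmt_9 (q : ℝ × ℝ × ℝ) :
    Tendsto (fun ε : ℝ => (attainSet ε).indicator (fun _ => (1 : ℝ)) q)
      (nhdsWithin 0 (Set.Ioi 0))
      (nhds (attainSet₀.indicator (fun _ => (1 : ℝ)) q)) := by
  by_cases hq : q ∈ attainSet₀
  · rw [Set.indicator_of_mem hq]
    refine tendsto_const_nhds.congr' ?_
    filter_upwards [self_mem_nhdsWithin] with ε hε
    exact (Set.indicator_of_mem (attainSet₀_subset_attainSet hε.ne' hq) (fun _ => (1 : ℝ))).symm
  · rw [Set.indicator_of_notMem hq]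
    refine tendsto_const_nhds.congr' ?_
    filter_upwards [eventually_notMem_attainSet hq] with ε hε
    exact (Set.indicator_of_notMem hε (fun _ => (1 : ℝ))).symm
end
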